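/- Let b > 0 and ε < 0, and let p = g_0 and q = g_ε be Laplace densities with scale b and locations 0 and ε respectively, where g_μ(x) = (1/(2b))·exp(−|x−μ|/b). Given an integer d ≥ 1 and group sizes m₁,…,m_d ∈ ℕ with N = m₁+…+m_d, define probability measures on ℝ^N (coordinates indexed by pairs (j,k), j ∈ {1,…,d}, k ∈ {1,…,m_j}): Q has density ∏_{j=1}^d ∏_{k=1}^{m_j} p(b_j^{(k)}), and P has density (1/d) ∑_{j=1}^d [∏_{k=1}^{m_j} q(b_j^{(k)})] · ∏_{j'≠j} ∏_{k=1}^{m_{j'}} p(b_{j'}^{(k)}). Then TV(P, Q) ≤ (1/(2√d)) · [ (1/d) ∑_{j=1}^d exp(−m_j ε/b) − 1 ]^{1/2}, and hence for any hypothesis test distinguishing Q from P the sum of the two error probabilities is at least 1 − (1/(2√d)) · [ (1/d) ∑_{j=1}^d exp(−m_j ε/b) − 1 ]^{1/2}. -/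

import Mathlib

open MeasureTheory

/-- Total variation distance between two measures:
`TV(P, Q) = sup over measurable sets s of |P s - Q s|`. -/
noncomputable def tvDist {Ω : Type*} [MeasurableSpace Ω] (P Q : Measure Ω) : ℝ :=
  ⨆ s : {s : Set Ω // MeasurableSet s}, |(P s.1).toReal - (Q s.1).toReal|

/-!
Write `f_j` for the density of the `j`-th component of `P` and `g` for that of `Q`. Cauchy–Schwarz
against `g` gives `TV(P, Q) ≤ ½ √χ²(P ‖ Q)`, and for the uniform mixture
`χ²(P ‖ Q) + 1 = d⁻² ∑_{j,j'} ∫ f_j f_{j'} / g`. Each `f_j f_{j'} / g` is a product over the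
coordinates, with factor `q² / p` on the coordinates of group `j` when `j = j'`, and factors
`q` or `p` (each of integral `1`) otherwise; so the cross terms are `1` and the diagonal ones are
`(∫ q² / p)^{m_j}`. For Laplace densities `q ≤ exp (-ε / b) p`, hence `∫ q² / p ≤ exp (-ε / b)`.
The testing bound is `P A + Q Aᶜ = 1 - (Q A - P A) ≥ 1 - TV(P, Q)`.
-/

open Real Finset Function

noncomputable def laplacePDF (b μ x : ℝ) : ℝ := 1 / (2 * b) * exp (-|x - μ| / b)

section Laplace

variable {b : ℝ}

lemma integral_exp_neg_abs_sub_div (hb : 0 < b) (μ : ℝ) :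
    ∫ x, exp (-|x - μ| / b) = 2 * b := by
  rw [integral_sub_right_eq_self (fun y => exp (-|y| / b)) μ,
    integral_comp_abs (f := fun y => exp (-y / b))]
  have h := integral_exp_mul_Ioi (a := -b⁻¹) (by simpa using hb) 0
  simp only [mul_zero, exp_zero, neg_mul, ← neg_div, inv_mul_eq_div] at h
  rw [h]
  field_simp

lemma laplacePDF_pos (hb : 0 < b) (μ x : ℝ) : 0 < laplacePDF b μ x := by
  unfold laplacePDF; positivity

lemma measurable_laplacePDF (b μ : ℝ) : Measurable (laplacePDF b μ) := by
  unfold laplacePDF; fun_prop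

lemma integral_laplacePDF (hb : 0 < b) (μ : ℝ) : ∫ x, laplacePDF b μ x = 1 := by
  simp only [laplacePDF]
  rw [integral_const_mul, integral_exp_neg_abs_sub_div hb]
  field_simp

lemma integrable_laplacePDF (hb : 0 < b) (μ : ℝ) : Integrable (laplacePDF b μ) :=
  .of_integral_ne_zero (by rw [integral_laplacePDF hb]; exact one_ne_zero)

lemma laplacePDF_le_exp_mul_laplacePDF (hb : 0 ≤ b) (μ ν x : ℝ) :
    laplacePDF b μ x ≤ exp (|μ - ν| / b) * laplacePDF b ν x := by
  unfold laplacePDF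
  rw [mul_left_comm, ← exp_add, ← add_div]
  gcongr
  linarith [abs_sub_le x μ ν]

end Laplace

section ChiSquare

variable {α : Type*} [MeasurableSpace α] {μ : Measure α}

/-- For probability densities `F`, `G` this is `∫ (F - G)² / G`. -/
noncomputable def chiSqDiv (μ : Measure α) (F G : α → ℝ) : ℝ := ∫ x, F x ^ 2 / G x ∂μ - 1

lemma integrable_sq_div_of_le_mul {p q : α → ℝ} {C : ℝ} (hpm : Measurable p) (hqm : Measurable q)
    (hp : ∀ x, 0 < p x) (hq0 : ∀ x, 0 ≤ q x) (hqC : ∀ x, q x ≤ C * p x) (hq : Integrable q μ) :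
    Integrable (fun x => q x ^ 2 / p x) μ := by
  refine (hq.const_mul C).mono' ((hqm.pow_const 2).div hpm).aestronglyMeasurable
    (ae_of_all _ fun x => ?_)
  rw [Real.norm_of_nonneg (by have := hp x; have := hq0 x; positivity),
    div_le_iff₀ (hp x)]
  nlinarith [hq0 x, hqC x]

lemma integral_sq_div_le_of_le_mul {p q : α → ℝ} {C : ℝ} (hpm : Measurable p)
    (hqm : Measurable q) (hp : ∀ x, 0 < p x) (hq0 : ∀ x, 0 ≤ q x) (hqC : ∀ x, q x ≤ C * p x)
    (hq : Integrable q μ) (hq1 : ∫ x, q x ∂μ = 1) :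
    ∫ x, q x ^ 2 / p x ∂μ ≤ C := by
  calc ∫ x, q x ^ 2 / p x ∂μ ≤ ∫ x, C * q x ∂μ := by
        refine integral_mono (integrable_sq_div_of_le_mul hpm hqm hp hq0 hqC hq)
          (hq.const_mul C) fun x => ?_
        rw [div_le_iff₀ (hp x)]
        nlinarith [hq0 x, hqC x]
    _ = C := by rw [integral_const_mul, hq1, mul_one]

lemma setIntegral_le_half_integral_abs {φ : α → ℝ} (hφ : Integrable φ μ)
    (h0 : ∫ x, φ x ∂μ = 0) (s : Set α) :
    ∫ x in s, φ x ∂μ ≤ 1 / 2 * ∫ x, |φ x| ∂μ := by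
  have hpos : ∫ x, max (φ x) 0 ∂μ = 1 / 2 * ∫ x, |φ x| ∂μ := by
    have : (fun x => max (φ x) 0) = fun x => 1 / 2 * (|φ x| + φ x) := by
      funext x
      rcases le_total 0 (φ x) with h | h
      · rw [max_eq_left h, abs_of_nonneg h]; ring
      · rw [max_eq_right h, abs_of_nonpos h]; ring
    rw [this, integral_const_mul, integral_add hφ.abs hφ, h0, add_zero]
  calc ∫ x in s, φ x ∂μ ≤ ∫ x in s, max (φ x) 0 ∂μ :=
        setIntegral_mono hφ.integrableOn hφ.pos_part.integrableOn fun x => le_max_left _ _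
    _ ≤ ∫ x, max (φ x) 0 ∂μ :=
        setIntegral_le_integral hφ.pos_part (ae_of_all _ fun x => le_max_right _ _)
    _ = 1 / 2 * ∫ x, |φ x| ∂μ := hpos

lemma abs_setIntegral_le_half_integral_abs {φ : α → ℝ} (hφ : Integrable φ μ)
    (h0 : ∫ x, φ x ∂μ = 0) (s : Set α) :
    |∫ x in s, φ x ∂μ| ≤ 1 / 2 * ∫ x, |φ x| ∂μ := by
  have hneg := setIntegral_le_half_integral_abs (φ := fun x => -φ x) hφ.neg
    (by rw [integral_neg, h0, neg_zero]) s
  simp only [integral_neg, abs_neg] at hneg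
  exact abs_le.mpr ⟨by linarith, setIntegral_le_half_integral_abs hφ h0 s⟩

lemma sub_sq_div_eq {f g : ℝ} (hg : g ≠ 0) : (f - g) ^ 2 / g = f ^ 2 / g - 2 * f + g := by
  field_simp; ring

variable {F G : α → ℝ}

lemma integrable_sub_sq_div (hG0 : ∀ x, 0 < G x) (hF : Integrable F μ)
    (hG : Integrable G μ) (hFG : Integrable (fun x => F x ^ 2 / G x) μ) :
    Integrable (fun x => (F x - G x) ^ 2 / G x) μ := by
  simp_rw [sub_sq_div_eq (hG0 _).ne']
  exact (hFG.sub (hF.const_mul 2)).add hG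

lemma integral_sub_sq_div_eq_chiSqDiv (hG0 : ∀ x, 0 < G x) (hF : Integrable F μ)
    (hG : Integrable G μ) (hFG : Integrable (fun x => F x ^ 2 / G x) μ)
    (hF1 : ∫ x, F x ∂μ = 1) (hG1 : ∫ x, G x ∂μ = 1) :
    ∫ x, (F x - G x) ^ 2 / G x ∂μ = chiSqDiv μ F G := by
  simp_rw [sub_sq_div_eq (hG0 _).ne']
  rw [integral_add (f := fun x => F x ^ 2 / G x - 2 * F x) (hFG.sub (hF.const_mul 2)) hG,
    integral_sub hFG (hF.const_mul 2),
    integral_const_mul, hF1, hG1, chiSqDiv]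
  ring

lemma integral_abs_sub_le_sqrt_chiSqDiv (hFm : Measurable F) (hGm : Measurable G)
    (hG0 : ∀ x, 0 < G x) (hF : Integrable F μ) (hG : Integrable G μ)
    (hFG : Integrable (fun x => F x ^ 2 / G x) μ)
    (hF1 : ∫ x, F x ∂μ = 1) (hG1 : ∫ x, G x ∂μ = 1) :
    ∫ x, |F x - G x| ∂μ ≤ sqrt (chiSqDiv μ F G) := by
  rw [← integral_sub_sq_div_eq_chiSqDiv hG0 hF hG hFG hF1 hG1]
  -- Cauchy–Schwarz for `|F - G| = (|F - G| / √G) * √G`.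
  have hfac : ∀ x, |F x - G x| = |F x - G x| / sqrt (G x) * sqrt (G x) := fun x =>
    (div_mul_cancel₀ _ (sqrt_pos.mpr (hG0 x)).ne').symm
  have hsq1 : ∀ x, (|F x - G x| / sqrt (G x)) ^ 2 = (F x - G x) ^ 2 / G x := fun x => by
    rw [div_pow, sq_abs, sq_sqrt (hG0 x).le]
  have hsq2 : ∀ x, sqrt (G x) ^ 2 = G x := fun x => sq_sqrt (hG0 x).le
  have hmem1 : MemLp (fun x => |F x - G x| / sqrt (G x)) (ENNReal.ofReal 2) μ := by
    rw [ENNReal.ofReal_ofNat,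
      memLp_two_iff_integrable_sq (Measurable.aestronglyMeasurable (by fun_prop))]
    simpa only [hsq1] using integrable_sub_sq_div hG0 hF hG hFG
  have hmem2 : MemLp (fun x => sqrt (G x)) (ENNReal.ofReal 2) μ := by
    rw [ENNReal.ofReal_ofNat,
      memLp_two_iff_integrable_sq (Measurable.aestronglyMeasurable (by fun_prop))]
    simpa only [hsq2] using hG
  have := integral_mul_le_Lp_mul_Lq_of_nonneg Real.HolderConjugate.two_two
    (ae_of_all _ fun x => by positivity) (ae_of_all _ fun x => by positivity) hmem1 hmem2
  simp_rw [← hfac, rpow_two, hsq1, hsq2, hG1, one_rpow, mul_one, ← sqrt_eq_rpow] at this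
  exact this

lemma toReal_withDensity_ofReal_apply (hFm : Measurable F) (hF0 : ∀ x, 0 ≤ F x) {s : Set α}
    (hs : MeasurableSet s) :
    ((μ.withDensity fun x => ENNReal.ofReal (F x)) s).toReal = ∫ x in s, F x ∂μ := by
  rw [withDensity_apply _ hs,
    integral_eq_lintegral_of_nonneg_ae (ae_of_all _ hF0) hFm.aestronglyMeasurable]

lemma isProbabilityMeasure_withDensity_ofReal (hF : Integrable F μ) (hF0 : ∀ x, 0 ≤ F x)
    (hF1 : ∫ x, F x ∂μ = 1) : IsProbabilityMeasure (μ.withDensity fun x => ENNReal.ofReal (F x)) :=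
  ⟨by rw [withDensity_apply _ MeasurableSet.univ, Measure.restrict_univ,
    ← ofReal_integral_eq_lintegral_ofReal hF (ae_of_all _ hF0), hF1, ENNReal.ofReal_one]⟩

lemma abs_withDensity_sub_withDensity_le (hFm : Measurable F) (hGm : Measurable G)
    (hF0 : ∀ x, 0 ≤ F x) (hG0 : ∀ x, 0 < G x) (hF : Integrable F μ) (hG : Integrable G μ)
    (hFG : Integrable (fun x => F x ^ 2 / G x) μ)
    (hF1 : ∫ x, F x ∂μ = 1) (hG1 : ∫ x, G x ∂μ = 1) {s : Set α} (hs : MeasurableSet s) :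
    |((μ.withDensity fun x => ENNReal.ofReal (F x)) s).toReal
        - ((μ.withDensity fun x => ENNReal.ofReal (G x)) s).toReal|
      ≤ 1 / 2 * sqrt (chiSqDiv μ F G) := by
  rw [toReal_withDensity_ofReal_apply hFm hF0 hs,
    toReal_withDensity_ofReal_apply hGm (fun x => (hG0 x).le) hs,
    ← integral_sub hF.integrableOn hG.integrableOn]
  calc |∫ x in s, F x - G x ∂μ| ≤ 1 / 2 * ∫ x, |F x - G x| ∂μ :=
        abs_setIntegral_le_half_integral_abs (φ := fun x => F x - G x) (hF.sub hG)
          (by rw [integral_sub hF hG, hF1, hG1, sub_self]) s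
    _ ≤ 1 / 2 * sqrt (chiSqDiv μ F G) := by
        gcongr
        exact integral_abs_sub_le_sqrt_chiSqDiv hFm hGm hG0 hF hG hFG hF1 hG1

omit [MeasurableSpace α] in
lemma mul_sum_sq_div {κ : Type*} [Fintype κ] (c : ℝ) (f : κ → α → ℝ) (x : α) :
    (c * ∑ j, f j x) ^ 2 / G x = c ^ 2 * ∑ j, ∑ j', f j x * f j' x / G x := by
  rw [mul_pow, sq (∑ j, f j x), sum_mul_sum, mul_div_assoc, sum_div]
  simp_rw [sum_div]

lemma integrable_mul_sum_sq_div {κ : Type*} [Fintype κ] (c : ℝ) (f : κ → α → ℝ)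
    (hint : ∀ j j', Integrable (fun x => f j x * f j' x / G x) μ) :
    Integrable (fun x => (c * ∑ j, f j x) ^ 2 / G x) μ := by
  simp_rw [mul_sum_sq_div]
  exact (integrable_finsetSum _ fun j _ => integrable_finsetSum _ fun j' _ => hint j j').const_mul _

lemma chiSqDiv_uniform_mixture {κ : Type*} [Fintype κ] [Nonempty κ] (f : κ → α → ℝ)
    (hint : ∀ j j', Integrable (fun x => f j x * f j' x / G x) μ)
    (hcross : ∀ j j', j ≠ j' → ∫ x, f j x * f j' x / G x ∂μ = 1) :
    chiSqDiv μ (fun x => 1 / (Fintype.card κ : ℝ) * ∑ j, f j x) G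
      = 1 / (Fintype.card κ : ℝ) *
          (1 / (Fintype.card κ : ℝ) * ∑ j, ∫ x, f j x * f j x / G x ∂μ - 1) := by
  classical
  have hn0 : (Fintype.card κ : ℝ) ≠ 0 := by exact_mod_cast Fintype.card_ne_zero
  have hrow : ∀ j, ∑ j', ∫ x, f j x * f j' x / G x ∂μ
      = ∫ x, f j x * f j x / G x ∂μ + (Fintype.card κ - 1) := fun j => by
    have hc : ∀ j', ∫ x, f j x * f j' x / G x ∂μ
        = 1 + if j = j' then ∫ x, f j x * f j x / G x ∂μ - 1 else 0 := fun j' => by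
      split_ifs with h
      · subst h; ring
      · rw [hcross j j' h, add_zero]
    rw [sum_congr rfl fun j' _ => hc j']
    simp_rw [sum_add_distrib, sum_ite_eq, if_pos (mem_univ j), sum_const, card_univ,
      nsmul_one]
    ring
  simp_rw [chiSqDiv, mul_sum_sq_div, one_div_pow]
  rw [integral_const_mul, integral_finsetSum _ fun j _ => integrable_finsetSum _ fun j' _ =>
    hint j j']
  simp_rw [integral_finsetSum _ fun j' _ => hint _ j', hrow, sum_add_distrib, sum_const,
    card_univ, nsmul_eq_mul]
  field_simp
  ring

end ChiSquare

section ProductDensity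

variable {ι : Type*} [DecidableEq ι] {p q : ℝ → ℝ}

lemma integrable_ite_mul_ite_div (hp0 : ∀ y, 0 < p y) (hp : Integrable p) (hq : Integrable q)
    (hqq : Integrable fun y => q y ^ 2 / p y) (S T : Finset ι) (i : ι) :
    Integrable fun y => (if i ∈ S then q else p) y * (if i ∈ T then q else p) y / p y := by
  split_ifs
  · simpa only [sq] using hqq
  all_goals simpa only [mul_div_cancel_right₀, mul_div_cancel_left₀, (hp0 _).ne', ne_eq,
    not_false_eq_true]

lemma integral_ite_mul_ite_div (hp0 : ∀ y, 0 < p y) (hp1 : ∫ y, p y = 1)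
    (hq1 : ∫ y, q y = 1) (S T : Finset ι) (i : ι) :
    ∫ y, (if i ∈ S then q else p) y * (if i ∈ T then q else p) y / p y
      = if i ∈ S ∩ T then ∫ y, q y ^ 2 / p y else 1 := by
  by_cases hS : i ∈ S <;> by_cases hT : i ∈ T <;>
    simp [hS, hT, sq, mul_div_cancel_left₀, (hp0 _).ne', hp1, hq1]

variable [Fintype ι]

noncomputable def prodPDF (p q : ℝ → ℝ) (S : Finset ι) (x : ι → ℝ) : ℝ :=
  ∏ i, (if i ∈ S then q else p) (x i)

lemma prodPDF_empty (p q : ℝ → ℝ) (x : ι → ℝ) :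
    prodPDF p q (∅ : Finset ι) x = ∏ i, p (x i) := by
  simp [prodPDF]

lemma measurable_prodPDF (hpm : Measurable p) (hqm : Measurable q) (S : Finset ι) :
    Measurable (prodPDF p q S) :=
  Finset.measurable_prod _ fun i _ =>
    (show Measurable (if i ∈ S then q else p) by split_ifs <;> assumption).comp
      (measurable_pi_apply i)

lemma prodPDF_nonneg (hp : ∀ y, 0 ≤ p y) (hq : ∀ y, 0 ≤ q y) (S : Finset ι) (x : ι → ℝ) :
    0 ≤ prodPDF p q S x :=
  prod_nonneg fun i _ => by split_ifs; exacts [hq _, hp _]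

lemma integrable_prodPDF (hp : Integrable p) (hq : Integrable q) (S : Finset ι) :
    Integrable (prodPDF p q S) :=
  Integrable.fintype_prod_dep fun i => by split_ifs; exacts [hq, hp]

lemma integral_prodPDF (hp1 : ∫ y, p y = 1) (hq1 : ∫ y, q y = 1) (S : Finset ι) :
    ∫ x, prodPDF p q S x = 1 := by
  simp only [prodPDF]
  rw [integral_fintype_prod_volume_eq_prod]
  exact prod_eq_one fun i _ => by split_ifs; exacts [hq1, hp1]

lemma isProbabilityMeasure_withDensity_prodPDF (hp0 : ∀ y, 0 ≤ p y) (hq0 : ∀ y, 0 ≤ q y)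
    (hp : Integrable p) (hq : Integrable q) (hp1 : ∫ y, p y = 1) (hq1 : ∫ y, q y = 1)
    (S : Finset ι) :
    IsProbabilityMeasure (volume.withDensity fun x => ENNReal.ofReal (prodPDF p q S x)) :=
  isProbabilityMeasure_withDensity_ofReal (integrable_prodPDF hp hq S) (prodPDF_nonneg hp0 hq0 S)
    (integral_prodPDF hp1 hq1 S)

lemma prodPDF_mul_prodPDF_div (p q : ℝ → ℝ) (S T : Finset ι) (x : ι → ℝ) :
    prodPDF p q S x * prodPDF p q T x / prodPDF p q ∅ x
      = ∏ i, (if i ∈ S then q else p) (x i) * (if i ∈ T then q else p) (x i) / p (x i) := by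
  rw [prodPDF_empty]
  simp only [prodPDF]
  rw [← prod_mul_distrib, ← prod_div_distrib]

lemma integrable_prodPDF_mul_prodPDF_div (hp0 : ∀ y, 0 < p y) (hp : Integrable p)
    (hq : Integrable q) (hqq : Integrable fun y => q y ^ 2 / p y) (S T : Finset ι) :
    Integrable fun x => prodPDF p q S x * prodPDF p q T x / prodPDF p q ∅ x := by
  simp_rw [prodPDF_mul_prodPDF_div]
  exact Integrable.fintype_prod_dep (integrable_ite_mul_ite_div hp0 hp hq hqq S T)

lemma integral_prodPDF_mul_prodPDF_div (hp0 : ∀ y, 0 < p y) (hp1 : ∫ y, p y = 1)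
    (hq1 : ∫ y, q y = 1) (S T : Finset ι) :
    ∫ x, prodPDF p q S x * prodPDF p q T x / prodPDF p q ∅ x
      = (∫ y, q y ^ 2 / p y) ^ #(S ∩ T) := by
  simp_rw [prodPDF_mul_prodPDF_div]
  rw [integral_fintype_prod_volume_eq_prod
    (fun i y => (if i ∈ S then q else p) y * (if i ∈ T then q else p) y / p y)]
  simp_rw [integral_ite_mul_ite_div hp0 hp1 hq1]
  rw [prod_ite_mem, univ_inter, prod_const]

lemma chiSqDiv_mixture_prodPDF {κ : Type*} [Fintype κ] [Nonempty κ] {S : κ → Finset ι}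
    (hS : Pairwise (Disjoint on S)) (hp0 : ∀ y, 0 < p y) (hp : Integrable p)
    (hq : Integrable q) (hqq : Integrable fun y => q y ^ 2 / p y) (hp1 : ∫ y, p y = 1)
    (hq1 : ∫ y, q y = 1) :
    chiSqDiv volume (fun x => 1 / (Fintype.card κ : ℝ) * ∑ j, prodPDF p q (S j) x)
        (prodPDF p q ∅)
      = 1 / (Fintype.card κ : ℝ) *
          (1 / (Fintype.card κ : ℝ) * ∑ j, (∫ y, q y ^ 2 / p y) ^ #(S j) - 1) := by
  rw [chiSqDiv_uniform_mixture _
    (fun j j' => integrable_prodPDF_mul_prodPDF_div hp0 hp hq hqq _ _)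
    fun j j' h => by
      rw [integral_prodPDF_mul_prodPDF_div hp0 hp1 hq1, disjoint_iff_inter_eq_empty.mp (hS h),
        card_empty, pow_zero]]
  simp_rw [integral_prodPDF_mul_prodPDF_div hp0 hp1 hq1, inter_self]

lemma abs_withDensity_mixture_prodPDF_sub_le {κ : Type*} [Fintype κ] [Nonempty κ]
    {S : κ → Finset ι} (hS : Pairwise (Disjoint on S)) {C : ℝ}
    (hpm : Measurable p) (hqm : Measurable q) (hp0 : ∀ y, 0 < p y) (hq0 : ∀ y, 0 ≤ q y)
    (hp : Integrable p) (hq : Integrable q) (hp1 : ∫ y, p y = 1) (hq1 : ∫ y, q y = 1)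
    (hqC : ∀ y, q y ≤ C * p y) {s : Set (ι → ℝ)} (hs : MeasurableSet s) :
    |((volume.withDensity fun x =>
          ENNReal.ofReal (1 / (Fintype.card κ : ℝ) * ∑ j, prodPDF p q (S j) x)) s).toReal
        - ((volume.withDensity fun x => ENNReal.ofReal (prodPDF p q ∅ x)) s).toReal|
      ≤ 1 / (2 * sqrt (Fintype.card κ)) *
          sqrt (1 / (Fintype.card κ : ℝ) * ∑ j, C ^ #(S j) - 1) := by
  have hn : (0 : ℝ) < Fintype.card κ := by exact_mod_cast Fintype.card_pos
  have hp0' : ∀ y, 0 ≤ p y := fun y => (hp0 y).le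
  have hqq := integrable_sq_div_of_le_mul hpm hqm hp0 hq0 hqC hq
  have hM : 0 ≤ ∫ y, q y ^ 2 / p y := integral_nonneg fun y => by have := hp0 y; positivity
  have hMC := integral_sq_div_le_of_le_mul hpm hqm hp0 hq0 hqC hq hq1
  have hF1 : ∫ x, 1 / (Fintype.card κ : ℝ) * ∑ j, prodPDF p q (S j) x = 1 := by
    rw [integral_const_mul, integral_finsetSum _ fun j _ => integrable_prodPDF hp hq _]
    simp_rw [integral_prodPDF hp1 hq1, sum_const, card_univ, nsmul_one]
    field_simp
  refine (abs_withDensity_sub_withDensity_le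
    ((Finset.measurable_sum _ fun j _ => measurable_prodPDF hpm hqm (S j)).const_mul _)
    (measurable_prodPDF hpm hqm ∅)
    (fun x => mul_nonneg (by positivity) (sum_nonneg fun j _ => prodPDF_nonneg hp0' hq0 _ x))
    (fun x => by rw [prodPDF_empty]; exact prod_pos fun i _ => hp0 _)
    ((integrable_finsetSum _ fun j _ => integrable_prodPDF hp hq (S j)).const_mul _)
    (integrable_prodPDF hp hq ∅)
    (integrable_mul_sum_sq_div _ _ fun j j' =>
      integrable_prodPDF_mul_prodPDF_div hp0 hp hq hqq (S j) (S j'))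
    hF1 (integral_prodPDF hp1 hq1 ∅) hs).trans ?_
  have hsqrt : sqrt (1 / (Fintype.card κ : ℝ)) = 1 / sqrt (Fintype.card κ) := by
    rw [one_div, sqrt_inv, one_div]
  rw [chiSqDiv_mixture_prodPDF hS hp0 hp hq hqq hp1 hq1, sqrt_mul (by positivity), hsqrt,
    ← mul_assoc, one_div_mul_one_div]
  gcongr

end ProductDensity

section Fibers

variable {κ : Type*} [Fintype κ] [DecidableEq κ] (β : κ → Type*) [∀ j, Fintype (β j)]

def fiberFinset (j : κ) : Finset (Σ j, β j) := univ.filter (·.1 = j)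

lemma card_fiberFinset (j : κ) : #(fiberFinset β j) = Fintype.card (β j) := by
  rw [fiberFinset, card_filter, Fintype.sum_sigma]
  simp [apply_ite Finset.card]

lemma pairwise_disjoint_fiberFinset : Pairwise (Disjoint on fiberFinset β) := by
  intro j j' h
  simp only [Function.onFun, fiberFinset]
  rw [disjoint_filter]
  intro i _ h1 h2
  exact h (h1.symm.trans h2)

lemma prodPDF_fiberFinset [∀ j, DecidableEq (β j)] (p q : ℝ → ℝ) (j : κ)
    (x : (Σ j, β j) → ℝ) :
    prodPDF p q (fiberFinset β j) x
      = (∏ k, q (x ⟨j, k⟩)) * ∏ j' ∈ univ.erase j, ∏ k, p (x ⟨j', k⟩) := by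
  rw [prodPDF, Fintype.prod_sigma, ← mul_prod_erase univ _ (mem_univ j)]
  congr 1
  · simp [fiberFinset]
  · refine prod_congr rfl fun j' hj' => ?_
    simp [fiberFinset, ne_of_mem_erase hj']

end Fibers

section TotalVariation

variable {Ω : Type*} [MeasurableSpace Ω] {P Q : Measure Ω} {B : ℝ}

lemma tvDist_le_of_forall (h : ∀ s, MeasurableSet s → |(P s).toReal - (Q s).toReal| ≤ B) :
    tvDist P Q ≤ B :=
  have : Nonempty {s : Set Ω // MeasurableSet s} := ⟨⟨∅, .empty⟩⟩
  ciSup_le fun s => h s.1 s.2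

lemma one_sub_le_add_compl_of_abs_sub_le [IsProbabilityMeasure Q] {s : Set Ω}
    (hs : MeasurableSet s) (h : |(P s).toReal - (Q s).toReal| ≤ B) :
    1 - B ≤ (P s).toReal + (Q sᶜ).toReal := by
  have hQ : (Q sᶜ).toReal = 1 - (Q s).toReal := probReal_compl_eq_one_sub hs
  linarith [(abs_le.mp h).1]

end TotalVariation

/-- Laplace version of the minimax lower bound: with `p = g₀` and `q = g_ε` Laplace
densities of scale `b` (and `ε < 0`), let `Q` be the product measure on `ℝ^N` (coordinates
indexed by `(j,k)`, `j < d`, `k < m j`) with all coordinates of density `p`, and `P` the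
measure with density `(1/d) ∑_j ∏_k q(b_j^{(k)}) ∏_{j'≠j} ∏_k p(b_{j'}^{(k)})`. Then
`TV(P, Q) ≤ (1/(2√d)) · ((1/d) ∑_j exp(-m_j ε/b) - 1)^{1/2}`, and any hypothesis test has
total error probability at least `1` minus that bound. -/
theorem tv_bound_mixture_laplace (b ε : ℝ) (hb : 0 < b) (hε : ε < 0)
    (p q : ℝ → ℝ)
    (hp : ∀ x, p x = (1 / (2 * b)) * Real.exp (-|x - 0| / b))
    (hq : ∀ x, q x = (1 / (2 * b)) * Real.exp (-|x - ε| / b))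
    (d : ℕ) (hd : 1 ≤ d) (m : Fin d → ℕ)
    (P Q : Measure (((j : Fin d) × Fin (m j)) → ℝ))
    (hQ : Q = volume.withDensity fun b' => ENNReal.ofReal (∏ i, p (b' i)))
    (hP : P = volume.withDensity fun b' => ENNReal.ofReal
      ((1 / d : ℝ) * ∑ j : Fin d,
        (∏ k : Fin (m j), q (b' ⟨j, k⟩)) *
          ∏ j' ∈ Finset.univ.erase j, ∏ k : Fin (m j'), p (b' ⟨j', k⟩))) :
    tvDist P Q ≤
        (1 / (2 * Real.sqrt d)) *
          Real.sqrt ((1 / d : ℝ) * ∑ j, Real.exp (-(m j) * ε / b) - 1) ∧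
      ∀ Ψ : (((j : Fin d) × Fin (m j)) → ℝ) → Bool, Measurable Ψ →
        (P {x | Ψ x = true}).toReal + (Q {x | Ψ x = false}).toReal ≥
          1 - (1 / (2 * Real.sqrt d)) *
            Real.sqrt ((1 / d : ℝ) * ∑ j, Real.exp (-(m j) * ε / b) - 1) := by
  obtain rfl : p = laplacePDF b 0 := funext hp
  obtain rfl : q = laplacePDF b ε := funext hq
  have : Nonempty (Fin d) := ⟨⟨0, hd⟩⟩
  have hQ' : Q = volume.withDensity fun x =>
      ENNReal.ofReal (prodPDF (laplacePDF b 0) (laplacePDF b ε) ∅ x) := by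
    simpa only [prodPDF_empty] using hQ
  have hP' : P = volume.withDensity fun x => ENNReal.ofReal (1 / (d : ℝ) *
      ∑ j, prodPDF (laplacePDF b 0) (laplacePDF b ε) (fiberFinset (fun j => Fin (m j)) j) x) := by
    simpa only [prodPDF_fiberFinset] using hP
  have hqp (y : ℝ) : laplacePDF b ε y ≤ exp (-ε / b) * laplacePDF b 0 y := by
    simpa [abs_of_neg hε] using laplacePDF_le_exp_mul_laplacePDF hb.le ε 0 y
  have hpow (j : Fin d) : exp (-ε / b) ^ #(fiberFinset (fun j => Fin (m j)) j)
      = exp (-(m j) * ε / b) := by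
    rw [card_fiberFinset, Fintype.card_fin, ← exp_nat_mul]; ring_nf
  have hset (s) (hs : MeasurableSet s) : |(P s).toReal - (Q s).toReal| ≤
      1 / (2 * sqrt d) * sqrt ((1 / d : ℝ) * ∑ j, exp (-(m j) * ε / b) - 1) := by
    rw [hP', hQ']
    simpa only [hpow, Fintype.card_fin] using
      abs_withDensity_mixture_prodPDF_sub_le (pairwise_disjoint_fiberFinset _)
        (measurable_laplacePDF b 0) (measurable_laplacePDF b ε) (laplacePDF_pos hb 0)
        (fun y => (laplacePDF_pos hb ε y).le) (integrable_laplacePDF hb 0)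
        (integrable_laplacePDF hb ε) (integral_laplacePDF hb 0) (integral_laplacePDF hb ε) hqp hs
  have : IsProbabilityMeasure Q := hQ' ▸ isProbabilityMeasure_withDensity_prodPDF
    (fun y => (laplacePDF_pos hb 0 y).le) (fun y => (laplacePDF_pos hb ε y).le)
    (integrable_laplacePDF hb 0) (integrable_laplacePDF hb ε) (integral_laplacePDF hb 0)
    (integral_laplacePDF hb ε) ∅
  refine ⟨tvDist_le_of_forall hset, fun Ψ hΨ => ?_⟩
  have hA : MeasurableSet {x | Ψ x = true} := hΨ (measurableSet_singleton true)
  rw [show {x | Ψ x = false} = {x | Ψ x = true}ᶜ by ext; simp]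
  exact one_sub_le_add_compl_of_abs_sub_le hA (hset _ hA)
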